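/- arXiv:2201.02070 — 3 statements merged into one kernel-verified Lean document; each statement's English description precedes it below -/
import Mathlib

section
/- Let ρ : ℝ×ℝ³ → ℝ and u : ℝ×ℝ³ → ℝ³ be smooth functions, ℤ³-periodic in the spatial variable, with ρ(t,x) > 0 for all (t,x), satisfying the continuity equation ∂ₜρ + div(ρu) = 0. Then for every t ∈ ℝ: d/dt ∫_Q ½ ρ|∇log ρ|² dx = ∫_Q ρ (Δlog ρ)(div u) dx + ∫_Q ρ |∇log ρ|² (div u) dx − ∫_Q ρ ∇u : (∇log ρ ⊗ ∇log ρ) dx, where ∇u : (∇log ρ ⊗ ∇log ρ) = Σᵢⱼ (∂ⱼuᵢ)(∂ᵢ log ρ)(∂ⱼ log ρ). -/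
open MeasureTheory Real

noncomputable section

/-- Spatial partial derivative `∂ᵢ` of a scalar function on `ℝ³` (realised as `Fin 3 → ℝ`). -/
def pd (i : Fin 3) (f : (Fin 3 → ℝ) → ℝ) (x : Fin 3 → ℝ) : ℝ :=
  deriv (fun s => f (Function.update x i s)) (x i)

/-- The fundamental domain `Q = [0,1]³` of the three-dimensional torus. -/
def Q : Set (Fin 3 → ℝ) := Set.Icc (fun _ => 0) (fun _ => 1)

/-- `ℤ³`-periodicity of a function on `ℝ³`. -/
def ZPeriodic (f : (Fin 3 → ℝ) → ℝ) : Prop :=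
  ∀ (x : Fin 3 → ℝ) (k : Fin 3 → ℤ), f (x + fun i => (k i : ℝ)) = f x

abbrev V3 := Fin 3 → ℝ

def DD (w : ℝ × V3) (f : ℝ × V3 → ℝ) (p : ℝ × V3) : ℝ := fderiv ℝ f p w

lemma le1 : ((⊤ : ℕ∞) : WithTop ℕ∞) ≠ 0 := by simp
lemma leA : ((⊤ : ℕ∞) : WithTop ℕ∞) + 1 ≤ ((⊤ : ℕ∞) : WithTop ℕ∞) := by exact_mod_cast le_top

lemma pd_eq {f : V3 → ℝ} {x : V3} (hf : DifferentiableAt ℝ f x) (i : Fin 3) :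
    pd i f x = fderiv ℝ f x (Pi.single i 1) := by
  have h2 : HasFDerivAt f (fderiv ℝ f x) (Function.update x i (x i)) := by
    rw [Function.update_eq_self]; exact hf.hasFDerivAt
  exact (h2.comp_hasDerivAt (x i) (hasDerivAt_update x i (x i))).deriv

lemma hasFDerivAt_mk_right (t : ℝ) (x : V3) :
    HasFDerivAt (fun y : V3 => (t, y)) (ContinuousLinearMap.inr ℝ ℝ V3) x := by
  have : (fun y : V3 => (t, y)) = fun y : V3 => ((t, 0) : ℝ × V3) + (ContinuousLinearMap.inr ℝ ℝ V3) y := by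
    funext y; simp [Prod.ext_iff]
  rw [this]
  exact ((ContinuousLinearMap.inr ℝ ℝ V3).hasFDerivAt).const_add (t, 0)

lemma pd_slice {f : ℝ × V3 → ℝ} {t : ℝ} {x : V3} (hf : DifferentiableAt ℝ f (t, x)) (i : Fin 3) :
    pd i (fun y => f (t, y)) x = DD (0, Pi.single i 1) f (t, x) := by
  rw [pd_eq (f := fun y => f (t, y))
      (by exact hf.comp x (hasFDerivAt_mk_right t x).differentiableAt) i]
  have h := (hf.hasFDerivAt.comp x (hasFDerivAt_mk_right t x)).fderiv
  rw [show (fun y => f (t, y)) = f ∘ (fun y : V3 => (t, y)) from rfl, h]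
  rfl

lemma hasDerivAt_slice {f : ℝ × V3 → ℝ} {t : ℝ} {x : V3} (hf : DifferentiableAt ℝ f (t, x)) :
    HasDerivAt (fun s => f (s, x)) (DD ((1 : ℝ), (0 : V3)) f (t, x)) t := by
  have hc : HasDerivAt (fun s : ℝ => (s, x)) ((1 : ℝ), (0 : V3)) t :=
    (hasDerivAt_id t).prodMk (hasDerivAt_const t x)
  exact hf.hasFDerivAt.comp_hasDerivAt t hc

lemma deriv_slice {f : ℝ × V3 → ℝ} {t : ℝ} {x : V3} (hf : DifferentiableAt ℝ f (t, x)) :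
    deriv (fun s => f (s, x)) t = DD ((1 : ℝ), (0 : V3)) f (t, x) :=
  (hasDerivAt_slice hf).deriv

lemma contDiff_DD {f : ℝ × V3 → ℝ} (hf : ContDiff ℝ (⊤ : ℕ∞) f) (w : ℝ × V3) :
    ContDiff ℝ (⊤ : ℕ∞) (DD w f) :=
  (hf.fderiv_right leA).clm_apply contDiff_const

lemma DD_mul {f g : ℝ × V3 → ℝ} {p : ℝ × V3} (hf : DifferentiableAt ℝ f p)
    (hg : DifferentiableAt ℝ g p) (w : ℝ × V3) :
    DD w (fun q => f q * g q) p = DD w f p * g p + f p * DD w g p := by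
  simp only [DD, fderiv_fun_mul hf hg]
  simp; ring

lemma DD_log {f : ℝ × V3 → ℝ} {p : ℝ × V3} (hf : DifferentiableAt ℝ f p)
    (hp : f p ≠ 0) (w : ℝ × V3) :
    DD w (fun q => Real.log (f q)) p = DD w f p / f p := by
  have h := (hf.hasFDerivAt.log hp).fderiv
  simp only [DD, h]
  simp [div_eq_inv_mul]

lemma DD_comm {f : ℝ × V3 → ℝ} (hf : ContDiff ℝ (⊤ : ℕ∞) f) (w w' : ℝ × V3) (p : ℝ × V3) :
    DD w (DD w' f) p = DD w' (DD w f) p := by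
  have hd : Differentiable ℝ f := hf.differentiable le1
  have hd2 : Differentiable ℝ (fderiv ℝ f) := (hf.fderiv_right leA).differentiable le1
  have key : ∀ v v' : ℝ × V3, DD v (DD v' f) p = (fderiv ℝ (fderiv ℝ f) p v) v' := by
    intro v v'
    have h := fderiv_clm_apply (𝕜 := ℝ) (hd2 p) (differentiableAt_const v')
    simp only [DD]
    show (fderiv ℝ (fun q => (fderiv ℝ f q) v') p) v = _
    rw [h]; simp
  rw [key w w', key w' w]
  exact second_derivative_symmetric (fun y => (hd y).hasFDerivAt) (hd2 p).hasFDerivAt w w'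

lemma isCompact_Q : IsCompact Q := isCompact_Icc

lemma fderiv_translate {E F : Type*} [NormedAddCommGroup E] [NormedSpace ℝ E]
    [NormedAddCommGroup F] [NormedSpace ℝ F]
    {f : E → F} (hf : Differentiable ℝ f) (c : E)
    (hper : ∀ y, f (y + c) = f y) (x : E) :
    fderiv ℝ f (x + c) = fderiv ℝ f x := by
  have h1 : HasFDerivAt (fun y => f (y + c)) (fderiv ℝ f (x + c)) x := by
    have := (hf (x + c)).hasFDerivAt.comp x ((hasFDerivAt_id x).add_const c)
    exact this
  have h2 : (fun y => f (y + c)) = f := funext hper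
  rw [h2] at h1
  exact h1.fderiv.symm

/-- spatial periodicity passes to `fderiv` (in the full space) -/
lemma fderiv_spatial_periodic {f : ℝ × V3 → ℝ} (hf : Differentiable ℝ f)
    (hper : ∀ t, ZPeriodic fun x => f (t, x)) (t : ℝ) (x : V3) (k : Fin 3 → ℤ) :
    fderiv ℝ f (t, x + fun i => (k i : ℝ)) = fderiv ℝ f (t, x) := by
  have hper' : ∀ p : ℝ × V3, f (p + ((0 : ℝ), fun i => (k i : ℝ))) = f p := by
    intro p
    have h0 : p + ((0 : ℝ), fun i => (k i : ℝ)) = (p.1, p.2 + fun i => (k i : ℝ)) := by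
      ext <;> simp
    rw [h0]
    exact hper p.1 p.2 k
  have := fderiv_translate hf ((0 : ℝ), fun i => (k i : ℝ)) hper' (t, x)
  simpa using this

lemma ZPeriodic_DD {f : ℝ × V3 → ℝ} (hf : ContDiff ℝ (⊤ : ℕ∞) f)
    (hper : ∀ t, ZPeriodic fun x => f (t, x)) (w : ℝ × V3) (t : ℝ) :
    ZPeriodic fun x => DD w f (t, x) := by
  intro x k
  simp only [DD]
  rw [fderiv_spatial_periodic (hf.differentiable le1) hper t x k]

lemma insertNth_one_eq (i : Fin 3) (x : Fin 2 → ℝ) :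
    Fin.insertNth i (1 : ℝ) x
      = Fin.insertNth i (0 : ℝ) x + fun j => (((Pi.single i 1 : Fin 3 → ℤ) j : ℤ) : ℝ) := by
  funext j
  refine Fin.succAboveCases i ?_ ?_ j
  · simp
  · intro m
    simp [Fin.insertNth_apply_succAbove, Pi.single_apply, Fin.succAbove_ne i m]

/-- integral over `Q` of a divergence of a smooth periodic field vanishes -/
lemma integral_div_zero (G : Fin 3 → V3 → ℝ) (hG : ∀ j, ContDiff ℝ (⊤ : ℕ∞) (G j))
    (hper : ∀ j, ZPeriodic (G j)) :
    ∫ x in Q, ∑ j, pd j (G j) x = 0 := by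
  have hGd : ∀ j, Differentiable ℝ (G j) := fun j => (hG j).differentiable le1
  have hcont : Continuous fun x => ∑ j, (fderiv ℝ (G j) x) (Pi.single j 1) := by
    refine continuous_finset_sum _ fun j _ => ?_
    exact (((hG j).fderiv_right leA).continuous).clm_apply continuous_const
  have key := MeasureTheory.integral_divergence_of_hasFDerivAt_off_countable'
      (a := fun _ => (0 : ℝ)) (b := fun _ => (1 : ℝ)) (n := 2)
      (fun i => le_of_lt one_pos) G (fun j x => fderiv ℝ (G j) x) ∅ Set.countable_empty
      (fun i => (hGd i).continuous.continuousOn)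
      (fun x _ i => (hGd i x).hasFDerivAt)
      (hcont.continuousOn.integrableOn_compact isCompact_Icc)
  have h1 : ∫ x in Q, ∑ j, pd j (G j) x
      = ∫ x in Set.Icc (fun _ => (0:ℝ)) (fun _ => (1:ℝ)), ∑ j, (fderiv ℝ (G j) x) (Pi.single j 1) := by
    refine setIntegral_congr_fun (measurableSet_Icc) fun x _ => ?_
    exact Finset.sum_congr rfl fun j _ => pd_eq (hGd j x) j
  rw [h1, key]
  refine Finset.sum_eq_zero fun i _ => ?_
  have : ∀ x : Fin 2 → ℝ, G i (Fin.insertNth i (1:ℝ) x) = G i (Fin.insertNth i (0:ℝ) x) := by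
    intro x
    rw [insertNth_one_eq]
    exact hper i (Fin.insertNth i 0 x) (Pi.single i 1)
  simp only [this, sub_self]

/-- differentiation under the integral sign over `Q` -/
lemma hasDerivAt_integral_Q (F : ℝ × V3 → ℝ) (hF : ContDiff ℝ (⊤ : ℕ∞) F) (t : ℝ) :
    HasDerivAt (fun s => ∫ x in Q, F (s, x)) (∫ x in Q, DD ((1:ℝ), (0:V3)) F (t, x)) t := by
  have hQm : MeasurableSet Q := measurableSet_Icc
  have hFc : Continuous F := hF.continuous
  have hF' : Continuous (DD ((1:ℝ), (0:V3)) F) := (contDiff_DD hF _).continuous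
  set K : Set (ℝ × V3) := Set.Icc (t - 1) (t + 1) ×ˢ Q with hK
  have hKc : IsCompact K := isCompact_Icc.prod isCompact_Q
  obtain ⟨C, hC⟩ := hKc.exists_bound_of_continuousOn (hF'.continuousOn)
  have main := hasDerivAt_integral_of_dominated_loc_of_deriv_le
      (μ := volume.restrict Q) (F := fun s x => F (s, x))
      (F' := fun s x => DD ((1:ℝ), (0:V3)) F (s, x))
      (bound := fun _ => C) (x₀ := t) (s := Metric.ball t 1) (Metric.ball_mem_nhds t one_pos)
      (Filter.Eventually.of_forall fun s =>
        (hFc.comp (Continuous.prodMk_right s)).aestronglyMeasurable)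
      ((hFc.comp (Continuous.prodMk_right t)).continuousOn.integrableOn_compact isCompact_Q)
      ((hF'.comp (Continuous.prodMk_right t)).aestronglyMeasurable)
      ?_ ?_ ?_
  · exact main.2
  · refine (MeasureTheory.ae_restrict_iff' hQm).2 (Filter.Eventually.of_forall fun x hx s hs => ?_)
    refine hC (s, x) ?_
    refine Set.mk_mem_prod ?_ hx
    have := Metric.mem_ball.1 hs
    rw [Real.dist_eq] at this
    constructor <;> linarith [abs_le.1 this.le]
  · exact MeasureTheory.integrableOn_const isCompact_Q.measure_lt_top.ne
  · exact Filter.Eventually.of_forall fun x s _ =>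
      hasDerivAt_slice (hF.differentiable le1 (s, x))

def sdv (i : Fin 3) : ℝ × V3 := ((0 : ℝ), Pi.single i 1)
def tdv : ℝ × V3 := ((1 : ℝ), (0 : V3))

section Main

variable {ρ : ℝ × (Fin 3 → ℝ) → ℝ} {u : ℝ × (Fin 3 → ℝ) → Fin 3 → ℝ}

/-- log of the density -/
def Lf (ρ : ℝ × V3 → ℝ) : ℝ × V3 → ℝ := fun p => Real.log (ρ p)
def vf (ρ : ℝ × V3 → ℝ) (i : Fin 3) : ℝ × V3 → ℝ := DD (sdv i) (Lf ρ)
def Uf (u : ℝ × V3 → Fin 3 → ℝ) (i : Fin 3) : ℝ × V3 → ℝ := fun p => u p i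
def θf (u : ℝ × V3 → Fin 3 → ℝ) : ℝ × V3 → ℝ := fun p => ∑ j, DD (sdv j) (Uf u j) p
def Sf (ρ : ℝ × V3 → ℝ) : ℝ × V3 → ℝ := fun p => ∑ i, vf ρ i p * vf ρ i p
def Ff (ρ : ℝ × V3 → ℝ) : ℝ × V3 → ℝ := fun p => (1/2) * ρ p * Sf ρ p
def Gf (ρ : ℝ × V3 → ℝ) (u : ℝ × V3 → Fin 3 → ℝ) (j : Fin 3) : ℝ × V3 → ℝ :=
  fun p => -((1/2) * ρ p * Uf u j p * Sf ρ p + ρ p * vf ρ j p * θf u p)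

variable (hρ : ContDiff ℝ (⊤ : ℕ∞) ρ) (hu : ContDiff ℝ (⊤ : ℕ∞) u)
  (hρpos : ∀ p, 0 < ρ p)

section
include hρ hρpos

lemma hL : ContDiff ℝ (⊤ : ℕ∞) (Lf ρ) := hρ.log fun p => (hρpos p).ne'

lemma hv (i : Fin 3) : ContDiff ℝ (⊤ : ℕ∞) (vf ρ i) := contDiff_DD (hL hρ hρpos) _

lemma hS : ContDiff ℝ (⊤ : ℕ∞) (Sf ρ) :=
  ContDiff.sum fun i _ => (hv hρ hρpos i).mul (hv hρ hρpos i)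

lemma hF : ContDiff ℝ (⊤ : ℕ∞) (Ff ρ) :=
  (contDiff_const.mul hρ).mul (hS hρ hρpos)

end

section
include hu

lemma hU (i : Fin 3) : ContDiff ℝ (⊤ : ℕ∞) (Uf u i) := contDiff_pi.mp hu i

lemma hθ : ContDiff ℝ (⊤ : ℕ∞) (θf u) :=
  ContDiff.sum fun j _ => contDiff_DD (hU hu j) _

end

include hρ hu hρpos in
lemma hG (i : Fin 3) : ContDiff ℝ (⊤ : ℕ∞) (Gf ρ u i) :=
  ((((contDiff_const.mul hρ).mul (hU hu i)).mul (hS hρ hρpos)).add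
    ((hρ.mul (hv hρ hρpos i)).mul (hθ hu))).neg

end Main

lemma DD_neg {f : ℝ × V3 → ℝ} (w : ℝ × V3) (p : ℝ × V3) :
    DD w (fun q => -f q) p = -DD w f p := by
  simp [DD, fderiv_neg]

lemma DD_add {f g : ℝ × V3 → ℝ} {p : ℝ × V3} (hf : DifferentiableAt ℝ f p)
    (hg : DifferentiableAt ℝ g p) (w : ℝ × V3) :
    DD w (fun q => f q + g q) p = DD w f p + DD w g p := by
  simp [DD, fderiv_fun_add hf hg]

lemma DD_sub {f g : ℝ × V3 → ℝ} {p : ℝ × V3} (hf : DifferentiableAt ℝ f p)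
    (hg : DifferentiableAt ℝ g p) (w : ℝ × V3) :
    DD w (fun q => f q - g q) p = DD w f p - DD w g p := by
  simp [DD, fderiv_fun_sub hf hg]

lemma DD_sum {f : Fin 3 → ℝ × V3 → ℝ} {p : ℝ × V3}
    (hf : ∀ i, DifferentiableAt ℝ (f i) p) (w : ℝ × V3) :
    DD w (fun q => ∑ i, f i q) p = ∑ i, DD w (f i) p := by
  simp [DD, fderiv_fun_sum fun i _ => hf i]

lemma DD_const_mul {f : ℝ × V3 → ℝ} {p : ℝ × V3} (hf : DifferentiableAt ℝ f p)
    (c : ℝ) (w : ℝ × V3) :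
    DD w (fun q => c * f q) p = c * DD w f p := by
  simp [DD, fderiv_const_mul hf c]

section Main2

variable {ρ : ℝ × (Fin 3 → ℝ) → ℝ} {u : ℝ × V3 → Fin 3 → ℝ}
variable (hρ : ContDiff ℝ (⊤ : ℕ∞) ρ) (hu : ContDiff ℝ (⊤ : ℕ∞) u)
  (hρpos : ∀ p, 0 < ρ p)

include hρ hρpos in
lemma f1 (w : ℝ × V3) (p : ℝ × V3) : DD w ρ p = ρ p * DD w (Lf ρ) p := by
  have h : DD w (Lf ρ) p = DD w ρ p / ρ p :=
    DD_log (hρ.differentiable le1 p) (hρpos p).ne' w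
  rw [h, mul_div_assoc', mul_comm, mul_div_assoc, div_self (hρpos p).ne', mul_one]

include hρ hu hρpos in
lemma f2 (hc : ∀ p, DD tdv ρ p + ∑ j, DD (sdv j) (fun q => ρ q * u q j) p = 0)
    (p : ℝ × V3) :
    DD tdv ρ p = -(ρ p * ∑ j, Uf u j p * vf ρ j p) - ρ p * θf u p := by
  have hterm : ∀ j, DD (sdv j) (fun q => ρ q * u q j) p
      = ρ p * vf ρ j p * Uf u j p + ρ p * DD (sdv j) (Uf u j) p := by
    intro j
    have h : DD (sdv j) (fun q => ρ q * Uf u j q) p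
        = DD (sdv j) ρ p * Uf u j p + ρ p * DD (sdv j) (Uf u j) p :=
      DD_mul (hρ.differentiable le1 p) ((hU hu j).differentiable le1 p) _
    rw [show (fun q => ρ q * u q j) = fun q => ρ q * Uf u j q from rfl, h,
      f1 hρ hρpos (sdv j) p]
    rfl
  have hc' := hc p
  rw [Finset.sum_congr rfl fun j _ => hterm j] at hc'
  rw [Finset.sum_add_distrib] at hc'
  have e1 : ∑ j, ρ p * vf ρ j p * Uf u j p = ρ p * ∑ j, Uf u j p * vf ρ j p := by
    rw [Finset.mul_sum]; exact Finset.sum_congr rfl fun j _ => by ring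
  have e2 : ∑ j, ρ p * DD (sdv j) (Uf u j) p = ρ p * θf u p := by
    rw [θf, Finset.mul_sum]
  rw [e1, e2] at hc'
  linarith

include hρ hu hρpos in
lemma f3 (hc : ∀ p, DD tdv ρ p + ∑ j, DD (sdv j) (fun q => ρ q * u q j) p = 0)
    (p : ℝ × V3) :
    DD tdv (Lf ρ) p = -(∑ j, Uf u j p * vf ρ j p) - θf u p := by
  have h1 := f1 hρ hρpos tdv p
  have h2 := f2 hρ hu hρpos hc p
  have hρne := (hρpos p).ne'
  rw [h1] at h2
  have := mul_left_cancel₀ hρne (by linarith [h2] : ρ p * DD tdv (Lf ρ) p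
    = ρ p * (-(∑ j, Uf u j p * vf ρ j p) - θf u p))
  exact this

include hu in
lemma DD_θ (w : ℝ × V3) (p : ℝ × V3) :
    DD w (θf u) p = ∑ j, DD w (DD (sdv j) (Uf u j)) p :=
  DD_sum (fun j => (contDiff_DD (hU hu j) _).differentiable le1 p) w

include hρ hρpos in
lemma DD_S (w : ℝ × V3) (p : ℝ × V3) :
    DD w (Sf ρ) p = ∑ i, (DD w (vf ρ i) p * vf ρ i p + vf ρ i p * DD w (vf ρ i) p) := by
  have h : DD w (fun q => ∑ i, vf ρ i q * vf ρ i q) p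
      = ∑ i, DD w (fun q => vf ρ i q * vf ρ i q) p :=
    DD_sum (fun i => (((hv hρ hρpos i).mul (hv hρ hρpos i)).differentiable le1) p) w
  rw [show Sf ρ = fun q => ∑ i, vf ρ i q * vf ρ i q from rfl, h]
  exact Finset.sum_congr rfl fun i _ =>
    DD_mul ((hv hρ hρpos i).differentiable le1 p) ((hv hρ hρpos i).differentiable le1 p) w

include hρ hρpos in
lemma f4 (i : Fin 3) (p : ℝ × V3) :
    DD tdv (vf ρ i) p = DD (sdv i) (DD tdv (Lf ρ)) p :=
  DD_comm (hL hρ hρpos) tdv (sdv i) p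

include hρ hρpos in
lemma Wsymm (i j : Fin 3) (p : ℝ × V3) :
    DD (sdv i) (vf ρ j) p = DD (sdv j) (vf ρ i) p :=
  DD_comm (hL hρ hρpos) (sdv i) (sdv j) p

include hρ hu hρpos in
lemma f5 (hc : ∀ p, DD tdv ρ p + ∑ j, DD (sdv j) (fun q => ρ q * u q j) p = 0)
    (i : Fin 3) (p : ℝ × V3) :
    DD (sdv i) (DD tdv (Lf ρ)) p
      = -(∑ j, (DD (sdv i) (Uf u j) p * vf ρ j p + Uf u j p * DD (sdv i) (vf ρ j) p))
        - ∑ j, DD (sdv i) (DD (sdv j) (Uf u j)) p := by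
  have hfun : DD tdv (Lf ρ) = fun q => (fun q => -(∑ j, Uf u j q * vf ρ j q)) q - θf u q :=
    funext fun q => by rw [f3 hρ hu hρpos hc q]
  rw [hfun]
  rw [DD_sub (by
      exact (ContDiff.sum fun j _ => (hU hu j).mul (hv hρ hρpos j)).neg.differentiable le1 p)
    ((hθ hu).differentiable le1 p) (sdv i)]
  rw [DD_θ hu (sdv i) p]
  have hneg : DD (sdv i) (fun q => -(∑ j, Uf u j q * vf ρ j q)) p
      = -DD (sdv i) (fun q => ∑ j, Uf u j q * vf ρ j q) p := DD_neg _ _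
  rw [hneg]
  have hsum : DD (sdv i) (fun q => ∑ j, Uf u j q * vf ρ j q) p
      = ∑ j, DD (sdv i) (fun q => Uf u j q * vf ρ j q) p :=
    DD_sum (fun j => ((hU hu j).mul (hv hρ hρpos j)).differentiable le1 p) _
  rw [hsum]
  have hprod : ∀ j, DD (sdv i) (fun q => Uf u j q * vf ρ j q) p
      = DD (sdv i) (Uf u j) p * vf ρ j p + Uf u j p * DD (sdv i) (vf ρ j) p := fun j =>
    DD_mul ((hU hu j).differentiable le1 p) ((hv hρ hρpos j).differentiable le1 p) _
  rw [Finset.sum_congr rfl fun j _ => hprod j]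

end Main2

section Main3
variable {ρ : ℝ × (Fin 3 → ℝ) → ℝ} {u : ℝ × V3 → Fin 3 → ℝ}
variable (hρ : ContDiff ℝ (⊤ : ℕ∞) ρ) (hu : ContDiff ℝ (⊤ : ℕ∞) u)
  (hρpos : ∀ p, 0 < ρ p)

include hρ hu hρpos in
lemma pointwise_identity
    (hc : ∀ p, DD tdv ρ p + ∑ j, DD (sdv j) (fun q => ρ q * u q j) p = 0)
    (p : ℝ × V3) :
    DD tdv (Ff ρ) p
      = (ρ p * (∑ j, DD (sdv j) (vf ρ j) p) * θf u p
         + ρ p * Sf ρ p * θf u p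
         - ρ p * ∑ i, ∑ j, DD (sdv j) (Uf u i) p * vf ρ i p * vf ρ j p)
        + ∑ j, DD (sdv j) (Gf ρ u j) p := by
  have hDρ := hρ.differentiable le1
  have hDU : ∀ i, Differentiable ℝ (Uf u i) := fun i => (hU hu i).differentiable le1
  have hDv : ∀ i, Differentiable ℝ (vf ρ i) := fun i => (hv hρ hρpos i).differentiable le1
  have hDS := (hS hρ hρpos).differentiable le1
  have hDθ := (hθ hu).differentiable le1
  -- expand the left-hand side
  have lhs1 : DD tdv (Ff ρ) p
      = DD tdv (fun q => (1/2) * ρ q) p * Sf ρ p + ((1/2) * ρ p) * DD tdv (Sf ρ) p :=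
    DD_mul ((contDiff_const.mul hρ).differentiable le1 p) (hDS p) tdv
  have lhs2 : DD tdv (fun q => (1/2) * ρ q) p = (1/2) * DD tdv ρ p :=
    DD_const_mul (hDρ p) _ _
  have lhs3 : DD tdv (Sf ρ) p
      = ∑ i, (DD tdv (vf ρ i) p * vf ρ i p + vf ρ i p * DD tdv (vf ρ i) p) :=
    DD_S hρ hρpos tdv p
  have lhs4 : ∀ i, DD tdv (vf ρ i) p
      = -(∑ j, (DD (sdv i) (Uf u j) p * vf ρ j p + Uf u j p * DD (sdv i) (vf ρ j) p))
        - ∑ j, DD (sdv i) (DD (sdv j) (Uf u j)) p := fun i => by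
    rw [f4 hρ hρpos i p, f5 hρ hu hρpos hc i p]
  -- expand the divergence term
  have hGj : ∀ j, DD (sdv j) (Gf ρ u j) p
      = -(((1/2) * (ρ p * vf ρ j p) * Uf u j p + (1/2) * ρ p * DD (sdv j) (Uf u j) p) * Sf ρ p
          + ((1/2) * ρ p * Uf u j p)
            * (∑ i, (DD (sdv j) (vf ρ i) p * vf ρ i p + vf ρ i p * DD (sdv j) (vf ρ i) p))
          + ((ρ p * vf ρ j p) * vf ρ j p + ρ p * DD (sdv j) (vf ρ j) p) * θf u p
          + (ρ p * vf ρ j p) * ∑ i, DD (sdv j) (DD (sdv i) (Uf u i)) p) := by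
    intro j
    have e0 : DD (sdv j) (Gf ρ u j) p
        = -DD (sdv j) (fun q => (1/2) * ρ q * Uf u j q * Sf ρ q
            + ρ q * vf ρ j q * θf u q) p := DD_neg _ _
    have e1 : DD (sdv j) (fun q => (1/2) * ρ q * Uf u j q * Sf ρ q
          + ρ q * vf ρ j q * θf u q) p
        = DD (sdv j) (fun q => (1/2) * ρ q * Uf u j q * Sf ρ q) p
          + DD (sdv j) (fun q => ρ q * vf ρ j q * θf u q) p :=
      DD_add (by
          exact (((contDiff_const.mul hρ).mul (hU hu j)).mul (hS hρ hρpos)).differentiable le1 p)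
        (by exact ((hρ.mul (hv hρ hρpos j)).mul (hθ hu)).differentiable le1 p) _
    have e2 : DD (sdv j) (fun q => (1/2) * ρ q * Uf u j q * Sf ρ q) p
        = DD (sdv j) (fun q => (1/2) * ρ q * Uf u j q) p * Sf ρ p
          + ((1/2) * ρ p * Uf u j p) * DD (sdv j) (Sf ρ) p :=
      DD_mul (by
          exact ((contDiff_const.mul hρ).mul (hU hu j)).differentiable le1 p) (hDS p) _
    have e3 : DD (sdv j) (fun q => (1/2) * ρ q * Uf u j q) p
        = DD (sdv j) (fun q => (1/2) * ρ q) p * Uf u j p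
          + ((1/2) * ρ p) * DD (sdv j) (Uf u j) p :=
      DD_mul (by exact (contDiff_const.mul hρ).differentiable le1 p) (hDU j p) _
    have e4 : DD (sdv j) (fun q => (1/2) * ρ q) p = (1/2) * DD (sdv j) ρ p :=
      DD_const_mul (hDρ p) _ _
    have e5 : DD (sdv j) (fun q => ρ q * vf ρ j q * θf u q) p
        = DD (sdv j) (fun q => ρ q * vf ρ j q) p * θf u p
          + (ρ p * vf ρ j p) * DD (sdv j) (θf u) p :=
      DD_mul (by exact (hρ.mul (hv hρ hρpos j)).differentiable le1 p) (hDθ p) _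
    have e6 : DD (sdv j) (fun q => ρ q * vf ρ j q) p
        = DD (sdv j) ρ p * vf ρ j p + ρ p * DD (sdv j) (vf ρ j) p :=
      DD_mul (hDρ p) (hDv j p) _
    have f1' : DD (sdv j) ρ p = ρ p * vf ρ j p := f1 hρ hρpos (sdv j) p
    rw [e0, e1, e2, e3, e4, e5, e6, DD_S hρ hρpos (sdv j) p, DD_θ hu (sdv j) p, f1']
    ring
  have lhs3' : DD tdv (Sf ρ) p
      = ∑ i, ((-(∑ j, (DD (sdv i) (Uf u j) p * vf ρ j p + Uf u j p * DD (sdv i) (vf ρ j) p))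
            - ∑ j, DD (sdv i) (DD (sdv j) (Uf u j)) p) * vf ρ i p
          + vf ρ i p * (-(∑ j, (DD (sdv i) (Uf u j) p * vf ρ j p
              + Uf u j p * DD (sdv i) (vf ρ j) p))
            - ∑ j, DD (sdv i) (DD (sdv j) (Uf u j)) p)) := by
    rw [lhs3]
    exact Finset.sum_congr rfl fun i _ => by rw [lhs4 i]
  have hGsum : ∑ j, DD (sdv j) (Gf ρ u j) p
      = ∑ j, (-(((1/2) * (ρ p * vf ρ j p) * Uf u j p
            + (1/2) * ρ p * DD (sdv j) (Uf u j) p) * Sf ρ p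
          + ((1/2) * ρ p * Uf u j p)
            * (∑ i, (DD (sdv j) (vf ρ i) p * vf ρ i p + vf ρ i p * DD (sdv j) (vf ρ i) p))
          + ((ρ p * vf ρ j p) * vf ρ j p + ρ p * DD (sdv j) (vf ρ j) p) * θf u p
          + (ρ p * vf ρ j p) * ∑ i, DD (sdv j) (DD (sdv i) (Uf u i)) p)) :=
    Finset.sum_congr rfl fun j _ => hGj j
  rw [lhs1, lhs2, lhs3', f2 hρ hu hρpos hc p, hGsum]
  -- pure algebra from here on
  simp only [Sf, θf, Fin.sum_univ_three]
  rw [Wsymm hρ hρpos 1 0 p, Wsymm hρ hρpos 2 0 p, Wsymm hρ hρpos 2 1 p]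
  ring

end Main3

lemma slice_contDiff {f : ℝ × V3 → ℝ} (hf : ContDiff ℝ (⊤ : ℕ∞) f) (t : ℝ) :
    ContDiff ℝ (⊤ : ℕ∞) (fun y => f (t, y)) :=
  hf.comp (contDiff_const.prodMk contDiff_id)

lemma intQ {f : V3 → ℝ} (hf : Continuous f) : IntegrableOn f Q :=
  hf.continuousOn.integrableOn_compact isCompact_Q

section Main4
variable {ρ : ℝ × (Fin 3 → ℝ) → ℝ} {u : ℝ × V3 → Fin 3 → ℝ}
variable (hρ : ContDiff ℝ (⊤ : ℕ∞) ρ) (hu : ContDiff ℝ (⊤ : ℕ∞) u)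
  (hρpos : ∀ p, 0 < ρ p)
  (hρper : ∀ t, ZPeriodic fun x => ρ (t, x))
  (huper : ∀ t i, ZPeriodic fun x => u (t, x) i)

include hρ hρpos hρper in
lemma hLper : ∀ t, ZPeriodic fun x => Lf ρ (t, x) := fun t x k => by
  simp only [Lf]
  have := hρper t x k
  simp only at this
  rw [this]

include hρ hρpos hρper in
lemma hvper (i : Fin 3) : ∀ t, ZPeriodic fun x => vf ρ i (t, x) :=
  ZPeriodic_DD (hL hρ hρpos) (hLper hρ hρpos hρper) (sdv i)

include hu huper in
lemma hAper (i j : Fin 3) : ∀ t, ZPeriodic fun x => DD (sdv i) (Uf u j) (t, x) :=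
  ZPeriodic_DD (hU hu j) (fun t => huper t j) (sdv i)

include hρ hu hρpos hρper huper in
lemma hGper (j : Fin 3) (t : ℝ) : ZPeriodic fun x => Gf ρ u j (t, x) := by
  intro x k
  have h1 : ρ (t, x + fun i => (k i : ℝ)) = ρ (t, x) := hρper t x k
  have h2 : Uf u j (t, x + fun i => (k i : ℝ)) = Uf u j (t, x) := huper t j x k
  have h3 : ∀ i, vf ρ i (t, x + fun i => (k i : ℝ)) = vf ρ i (t, x) := fun i =>
    hvper hρ hρpos hρper i t x k
  have h4 : ∀ i, DD (sdv i) (Uf u i) (t, x + fun i => (k i : ℝ))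
      = DD (sdv i) (Uf u i) (t, x) := fun i => hAper hu huper i i t x k
  simp only [Gf, Sf, θf, h1, h2, h3, h4]

include hρ hu hρpos hρper huper in
lemma div_term_zero (t : ℝ) :
    ∫ x in Q, ∑ j, DD (sdv j) (Gf ρ u j) (t, x) = 0 := by
  have hGc : ∀ j, ContDiff ℝ (⊤ : ℕ∞) (fun y => Gf ρ u j (t, y)) := fun j =>
    slice_contDiff (hG hρ hu hρpos j) t
  have hcongr : (fun x => ∑ j, DD (sdv j) (Gf ρ u j) (t, x))
      = fun x => ∑ j, pd j (fun y => Gf ρ u j (t, y)) x := by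
    funext x
    refine Finset.sum_congr rfl fun j _ => ?_
    exact (pd_slice ((hG hρ hu hρpos j).differentiable le1 (t, x)) j).symm
  rw [hcongr]
  exact integral_div_zero (fun j y => Gf ρ u j (t, y)) hGc
    (fun j => hGper hρ hu hρpos hρper huper j t)

end Main4

lemma hasDerivAt_integral_Q' (F : ℝ × V3 → ℝ) (hF : ContDiff ℝ (⊤ : ℕ∞) F) (t : ℝ) :
    HasDerivAt (fun s => ∫ x in Q, F (s, x)) (∫ x in Q, DD tdv F (t, x)) t :=
  hasDerivAt_integral_Q F hF t

/-- Identity for the time derivative of `∫ ½ ρ |∇log ρ|²` along smooth positive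
periodic solutions of the continuity equation:
`d/dt ∫ ½ρ|∇log ρ|² = ∫ ρ (Δlog ρ)(div u) + ∫ ρ|∇log ρ|²(div u)
  − ∫ ρ ∇u : (∇log ρ ⊗ ∇log ρ)`. -/
theorem grad_log_density_identity
    (ρ : ℝ × (Fin 3 → ℝ) → ℝ) (u : ℝ × (Fin 3 → ℝ) → Fin 3 → ℝ)
    (hρ : ContDiff ℝ (⊤ : ℕ∞) ρ) (hu : ContDiff ℝ (⊤ : ℕ∞) u)
    (hρper : ∀ t, ZPeriodic fun x => ρ (t, x))
    (huper : ∀ t i, ZPeriodic fun x => u (t, x) i)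
    (hρpos : ∀ t x, 0 < ρ (t, x))
    -- continuity equation ∂ₜρ + div(ρu) = 0
    (hcont : ∀ t x,
      deriv (fun s => ρ (s, x)) t
        + ∑ j, pd j (fun y => ρ (t, y) * u (t, y) j) x = 0) :
    ∀ t : ℝ,
      deriv (fun s => ∫ x in Q,
          (1 / 2) * ρ (s, x) * ∑ i, (pd i (fun y => Real.log (ρ (s, y))) x) ^ 2) t
      = (∫ x in Q, ρ (t, x)
            * (∑ j, pd j (fun y => pd j (fun z => Real.log (ρ (t, z))) y) x)
            * ∑ i, pd i (fun y => u (t, y) i) x)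
        + (∫ x in Q, ρ (t, x)
            * (∑ i, (pd i (fun y => Real.log (ρ (t, y))) x) ^ 2)
            * ∑ i, pd i (fun y => u (t, y) i) x)
        - ∫ x in Q, ρ (t, x) * ∑ i, ∑ j,
            pd j (fun y => u (t, y) i) x
              * pd i (fun y => Real.log (ρ (t, y))) x
              * pd j (fun y => Real.log (ρ (t, y))) x := by
  intro t
  have hρpos' : ∀ p : ℝ × V3, 0 < ρ p := fun p => hρpos p.1 p.2
  have hDL := (hL hρ hρpos').differentiable le1
  have hDv : ∀ i, Differentiable ℝ (vf ρ i) := fun i => (hv hρ hρpos' i).differentiable le1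
  have hDU : ∀ i, Differentiable ℝ (Uf u i) := fun i => (hU hu i).differentiable le1
  -- continuity equation in directional-derivative form
  have hcDD : ∀ p : ℝ × V3,
      DD tdv ρ p + ∑ j, DD (sdv j) (fun q => ρ q * u q j) p = 0 := by
    rintro ⟨s, x⟩
    have h1 : deriv (fun s' => ρ (s', x)) s = DD tdv ρ (s, x) :=
      deriv_slice (hρ.differentiable le1 (s, x))
    have h2 : ∀ j, pd j (fun y => ρ (s, y) * u (s, y) j) x
        = DD (sdv j) (fun q => ρ q * u q j) (s, x) := fun j =>
      pd_slice ((hρ.mul (hU hu j)).differentiable le1 (s, x)) j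
    rw [← h1, show (∑ j, DD (sdv j) (fun q => ρ q * u q j) (s, x))
        = ∑ j, pd j (fun y => ρ (s, y) * u (s, y) j) x from
      Finset.sum_congr rfl fun j _ => (h2 j).symm]
    exact hcont s x
  -- rewrite the left-hand side as an integral of `Ff`
  have hfun : (fun s => ∫ x in Q,
        (1 / 2) * ρ (s, x) * ∑ i, (pd i (fun y => Real.log (ρ (s, y))) x) ^ 2)
      = fun s => ∫ x in Q, Ff ρ (s, x) := by
    funext s
    refine congrArg (fun g : V3 → ℝ => ∫ x in Q, g x) (funext fun x => ?_)
    have hv' : ∀ i, pd i (fun y => Real.log (ρ (s, y))) x = vf ρ i (s, x) := fun i =>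
      pd_slice (f := Lf ρ) (hDL (s, x)) i
    simp only [hv', Ff, Sf, pow_two]
  rw [hfun, (hasDerivAt_integral_Q' (Ff ρ) (hF hρ hρpos') t).deriv]
  -- names for the three target integrands, in DD form
  set A : V3 → ℝ := fun x =>
    ρ (t, x) * (∑ j, DD (sdv j) (vf ρ j) (t, x)) * θf u (t, x) with hA
  set B : V3 → ℝ := fun x => ρ (t, x) * Sf ρ (t, x) * θf u (t, x) with hB
  set C : V3 → ℝ := fun x =>
    ρ (t, x) * ∑ i, ∑ j, DD (sdv j) (Uf u i) (t, x) * vf ρ i (t, x) * vf ρ j (t, x) with hC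
  set Dv : V3 → ℝ := fun x => ∑ j, DD (sdv j) (Gf ρ u j) (t, x) with hDv'
  -- continuity of all the pieces
  have cρ : Continuous fun x => ρ (t, x) := hρ.continuous.comp (Continuous.prodMk_right t)
  have cθ : Continuous fun x => θf u (t, x) := (hθ hu).continuous.comp (Continuous.prodMk_right t)
  have cS : Continuous fun x => Sf ρ (t, x) :=
    (hS hρ hρpos').continuous.comp (Continuous.prodMk_right t)
  have cv : ∀ i, Continuous fun x => vf ρ i (t, x) := fun i =>
    (hv hρ hρpos' i).continuous.comp (Continuous.prodMk_right t)
  have cW : ∀ i j, Continuous fun x => DD (sdv i) (vf ρ j) (t, x) := fun i j =>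
    (contDiff_DD (hv hρ hρpos' j) _).continuous.comp (Continuous.prodMk_right t)
  have cA : Continuous A := (cρ.mul (continuous_finset_sum _ fun j _ => cW j j)).mul cθ
  have cB : Continuous B := (cρ.mul cS).mul cθ
  have cC : Continuous C := cρ.mul (continuous_finset_sum _ fun i _ =>
    continuous_finset_sum _ fun j _ =>
      (((contDiff_DD (hU hu i) _).continuous.comp (Continuous.prodMk_right t)).mul (cv i)).mul (cv j))
  have cDv : Continuous Dv := continuous_finset_sum _ fun j _ =>
    (contDiff_DD (hG hρ hu hρpos' j) _).continuous.comp (Continuous.prodMk_right t)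
  -- the integral of the time derivative splits
  have hpt : ∀ x : V3, DD tdv (Ff ρ) (t, x) = (A x + B x - C x) + Dv x := fun x => by
    simpa [hA, hB, hC, hDv'] using
      pointwise_identity hρ hu hρpos' hcDD (t, x)
  have hsplit : ∫ x in Q, DD tdv (Ff ρ) (t, x)
      = ((∫ x in Q, A x) + (∫ x in Q, B x) - ∫ x in Q, C x) + ∫ x in Q, Dv x := by
    rw [congrArg (fun g : V3 → ℝ => ∫ x in Q, g x) (funext hpt)]
    have i1 : IntegrableOn (fun x => A x + B x - C x) Q :=
      ((intQ cA).add (intQ cB)).sub (intQ cC)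
    have i2 : IntegrableOn (fun x => A x + B x) Q := (intQ cA).add (intQ cB)
    rw [integral_add i1 (intQ cDv), integral_sub i2 (intQ cC), integral_add (intQ cA) (intQ cB)]
  rw [hsplit, div_term_zero hρ hu hρpos' hρper huper t, add_zero]
  -- identify the three target integrals
  have hI1 : (∫ x in Q, ρ (t, x)
        * (∑ j, pd j (fun y => pd j (fun z => Real.log (ρ (t, z))) y) x)
        * ∑ i, pd i (fun y => u (t, y) i) x) = ∫ x in Q, A x := by
    refine congrArg (fun g : V3 → ℝ => ∫ x in Q, g x) (funext fun x => ?_)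
    have h1 : ∀ j, pd j (fun y => pd j (fun z => Real.log (ρ (t, z))) y) x
        = DD (sdv j) (vf ρ j) (t, x) := by
      intro j
      have hin : (fun y => pd j (fun z => Real.log (ρ (t, z))) y)
          = fun y => vf ρ j (t, y) :=
        funext fun y => pd_slice (f := Lf ρ) (hDL (t, y)) j
      rw [hin]
      exact pd_slice (f := vf ρ j) (hDv j (t, x)) j
    have h2 : ∀ i, pd i (fun y => u (t, y) i) x = DD (sdv i) (Uf u i) (t, x) := fun i =>
      pd_slice (f := Uf u i) (hDU i (t, x)) i
    simp only [h1, h2, hA, θf]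
  have hI2 : (∫ x in Q, ρ (t, x)
        * (∑ i, (pd i (fun y => Real.log (ρ (t, y))) x) ^ 2)
        * ∑ i, pd i (fun y => u (t, y) i) x) = ∫ x in Q, B x := by
    refine congrArg (fun g : V3 → ℝ => ∫ x in Q, g x) (funext fun x => ?_)
    have hv' : ∀ i, pd i (fun y => Real.log (ρ (t, y))) x = vf ρ i (t, x) := fun i =>
      pd_slice (f := Lf ρ) (hDL (t, x)) i
    have h2 : ∀ i, pd i (fun y => u (t, y) i) x = DD (sdv i) (Uf u i) (t, x) := fun i =>
      pd_slice (f := Uf u i) (hDU i (t, x)) i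
    simp only [hv', h2, hB, Sf, θf, pow_two]
  have hI3 : (∫ x in Q, ρ (t, x) * ∑ i, ∑ j,
        pd j (fun y => u (t, y) i) x
          * pd i (fun y => Real.log (ρ (t, y))) x
          * pd j (fun y => Real.log (ρ (t, y))) x) = ∫ x in Q, C x := by
    refine congrArg (fun g : V3 → ℝ => ∫ x in Q, g x) (funext fun x => ?_)
    have hv' : ∀ i, pd i (fun y => Real.log (ρ (t, y))) x = vf ρ i (t, x) := fun i =>
      pd_slice (f := Lf ρ) (hDL (t, x)) i
    have h2 : ∀ i j, pd j (fun y => u (t, y) i) x = DD (sdv j) (Uf u i) (t, x) := fun i j =>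
      pd_slice (f := Uf u i) (hDU i (t, x)) j
    simp only [hv', h2, hC]
  rw [hI1, hI2, hI3]
end
end

section
/- Let X be a separable Banach space with topological dual X*, and let Y be a topological space. Suppose F : X* → Y is sequentially continuous with respect to the weak-star topology on X*, i.e. whenever a sequence (xₙ*) in X* converges weak-star to x* (meaning xₙ*(x) → x*(x) for every x ∈ X), then F(xₙ*) → F(x*) in Y. Then F is measurable from (X*, Borel σ-field of the weak-star topology) to (Y, Borel σ-field generated by the open sets of Y). -/
/-!
By Banach–Alaoglu the weak-star closed balls of `X*` are compact, and since `X` is separable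
they are metrizable (evaluation at a dense sequence embeds them in `ℝ^ℕ`). On each ball sequential
continuity is therefore continuity, and countably many balls, all weak-star closed, cover `X*`.
-/

open Filter Set TopologicalSpace

theorem measurable_of_domRestrict_of_iUnion_eq_univ {α β ι : Type*} [Countable ι]
    [MeasurableSpace α] [MeasurableSpace β] {K : ι → Set α} (hK : ∀ i, MeasurableSet (K i))
    (hcover : ⋃ i, K i = univ) {f : α → β} (hf : ∀ i, Measurable ((K i).domRestrict f)) :
    Measurable f := by
  convert measurable_liftCover K hK _ hf (fun _ _ _ _ _ => rfl) hcover
  ext x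
  obtain ⟨i, hi⟩ := mem_iUnion.1 (hcover.ge (mem_univ x))
  exact (liftCover_of_mem (f := fun i => (K i).domRestrict f) hi).symm

theorem SeqContinuous.continuous_domRestrict {α β : Type*} [TopologicalSpace α]
    [TopologicalSpace β] {f : α → β} (hf : SeqContinuous f) (s : Set α) [SequentialSpace s] :
    Continuous (s.domRestrict f) :=
  SeqContinuous.continuous fun _ _ h => hf (continuous_subtype_val.seqContinuous h)

theorem SeqContinuous.measurable_of_iUnion_eq_univ {α β ι : Type*} [Countable ι]
    [TopologicalSpace α] [MeasurableSpace α] [OpensMeasurableSpace α]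
    [TopologicalSpace β] [MeasurableSpace β] [BorelSpace β]
    {K : ι → Set α} [∀ i, SequentialSpace (K i)] (hK : ∀ i, MeasurableSet (K i))
    (hcover : ⋃ i, K i = univ) {f : α → β} (hf : SeqContinuous f) : Measurable f :=
  measurable_of_domRestrict_of_iUnion_eq_univ hK hcover fun _ =>
    (hf.continuous_domRestrict _).measurable

namespace WeakDual

variable {𝕜 E : Type*} [NontriviallyNormedField 𝕜] [SeminormedAddCommGroup E] [NormedSpace 𝕜 E]

theorem iUnion_closedBall_nat_eq_univ :
    ⋃ n : ℕ, toStrongDual ⁻¹' Metric.closedBall (0 : StrongDual 𝕜 E) n = univ := by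
  rw [← preimage_iUnion, Metric.iUnion_closedBall_nat, preimage_univ]

theorem measurable_of_seqContinuous [ProperSpace 𝕜] [SeparableSpace E]
    [MeasurableSpace (WeakDual 𝕜 E)] [BorelSpace (WeakDual 𝕜 E)]
    {Y : Type*} [TopologicalSpace Y] [MeasurableSpace Y] [BorelSpace Y]
    {F : WeakDual 𝕜 E → Y} (hF : SeqContinuous F) : Measurable F := by
  have (n : ℕ) : SequentialSpace (toStrongDual ⁻¹' Metric.closedBall (0 : StrongDual 𝕜 E) n) :=
    have := metrizable_of_isCompact 𝕜 E _ (isCompact_closedBall 0 n)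
    inferInstance
  exact hF.measurable_of_iUnion_eq_univ (fun (n : ℕ) => (isClosed_closedBall 0 n).measurableSet)
    iUnion_closedBall_nat_eq_univ

end WeakDual

theorem weakstar_sequentially_continuous_measurable_general
    {X : Type*} [NormedAddCommGroup X] [NormedSpace ℝ X]
    [TopologicalSpace.SeparableSpace X]
    {Y : Type*} [TopologicalSpace Y]
    (F : WeakDual ℝ X → Y)
    (hF : ∀ (φ : WeakDual ℝ X) (φs : ℕ → WeakDual ℝ X),
      (∀ x : X, Tendsto (fun n => φs n x) atTop (nhds (φ x))) →
      Tendsto (fun n => F (φs n)) atTop (nhds (F φ))) :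
    @Measurable (WeakDual ℝ X) Y (borel (WeakDual ℝ X)) (borel Y) F := by
  borelize (WeakDual ℝ X) Y
  refine WeakDual.measurable_of_seqContinuous fun φs φ hφ => hF φ φs fun x => ?_
  exact ((WeakDual.eval_continuous x).tendsto φ).comp hφ

/-- If `X` is a separable Banach space and `F : X* → Y` is sequentially continuous from the
weak-star topology on the dual `X*` to a topological space `Y`, then `F` is measurable from
the Borel σ-field of the weak-star topology to the Borel σ-field of `Y`. -/
theorem weakstar_sequentially_continuous_measurable
    {X : Type*} [NormedAddCommGroup X] [NormedSpace ℝ X] [CompleteSpace X]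
    [TopologicalSpace.SeparableSpace X]
    {Y : Type*} [TopologicalSpace Y]
    (F : WeakDual ℝ X → Y)
    (hF : ∀ (φ : WeakDual ℝ X) (φs : ℕ → WeakDual ℝ X),
      (∀ x : X, Tendsto (fun n => φs n x) atTop (nhds (φ x))) →
      Tendsto (fun n => F (φs n)) atTop (nhds (F φ))) :
    @Measurable (WeakDual ℝ X) Y (borel (WeakDual ℝ X)) (borel Y) F :=
  weakstar_sequentially_continuous_measurable_general F hF
end

section
/- Let X be a separable Banach space with topological dual X*, and let (xₙ) be a sequence that is dense in the closed unit ball of X. For n ∈ ℕ define fₙ : X* → ℝ by fₙ(x*) = x*(xₙ). Then the Borel σ-field on X* generated by the weak-star topology equals the σ-field σ(fₙ : n ∈ ℕ) generated by the functionals fₙ. -/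
/-!
A functional in `X*` is determined by its values on a sequence dense in the unit ball, so
`Φ φ = (φ (xₙ))ₙ` is a continuous injection of the weak-star dual into `ℕ → ℝ`. By Banach–Alaoglu
the weak-star dual is σ-compact, and a continuous injection of a σ-compact space into a Hausdorff
space maps every `U ∩ K` (`U` open, `K` compact) to the difference `Φ '' K \ Φ '' (K \ U)` of two
compact sets. Hence every weak-star open set is the preimage of a Borel set under `Φ`, and the
σ-field `Φ` pulls back from `ℕ → ℝ` is exactly `σ(fₙ : n ∈ ℕ)`.
-/

open Set

theorem borel_le_comap_of_continuous_injective {α β : Type*} [TopologicalSpace α]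
    [SigmaCompactSpace α] [TopologicalSpace β] [T2Space β] [MeasurableSpace β]
    [OpensMeasurableSpace β] {Φ : α → β} (hΦc : Continuous Φ) (hΦi : Function.Injective Φ) :
    borel α ≤ MeasurableSpace.comap Φ ‹_› := by
  refine MeasurableSpace.generateFrom_le fun U (hU : IsOpen U) => ?_
  rw [← inter_univ U, ← iUnion_compactCovering, inter_iUnion]
  refine MeasurableSet.iUnion fun m => ?_
  set K := compactCovering α m
  have hK : IsCompact K := isCompact_compactCovering α m
  have himage : Φ '' (U ∩ K) = Φ '' K \ Φ '' (K \ U) := by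
    rw [← image_sdiff hΦi, sdiff_sdiff_right_self, inter_comm]
  refine ⟨_, ?_, preimage_image_eq _ hΦi⟩
  rw [himage]
  exact (hK.image hΦc).isClosed.measurableSet.diff ((hK.diff hU).image hΦc).isClosed.measurableSet

theorem borel_eq_comap_of_continuous_injective {α β : Type*} [TopologicalSpace α]
    [SigmaCompactSpace α] [TopologicalSpace β] [T2Space β] [MeasurableSpace β]
    [BorelSpace β] {Φ : α → β} (hΦc : Continuous Φ) (hΦi : Function.Injective Φ) :
    borel α = MeasurableSpace.comap Φ ‹_› := by
  borelize β
  exact le_antisymm (borel_le_comap_of_continuous_injective hΦc hΦi) hΦc.borel_measurable.comap_le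

theorem MeasurableSpace.comap_pi_eq_iSup {α ι : Type*} {X : ι → Type*}
    [m : ∀ i, MeasurableSpace (X i)] (f : ∀ i, α → X i) :
    MeasurableSpace.pi.comap (fun a i => f i a) = ⨆ i, (m i).comap (f i) := by
  simp only [MeasurableSpace.pi, MeasurableSpace.comap_iSup, MeasurableSpace.comap_comp]
  rfl

theorem Submodule.dense_span_of_nonempty_interior_closure {𝕜 E : Type*}
    [NontriviallyNormedField 𝕜] [AddCommGroup E] [TopologicalSpace E] [IsTopologicalAddGroup E]
    [Module 𝕜 E] [ContinuousSMul 𝕜 E] {s : Set E} (hs : (interior (closure s)).Nonempty) :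
    Dense (span 𝕜 s : Set E) := by
  refine dense_iff_closure_eq.2 <| congrArg SetLike.coe <|
    (span 𝕜 s).topologicalClosure.eq_top_of_nonempty_interior' ?_
  exact hs.mono (interior_mono (closure_mono subset_span))

namespace WeakDual

variable {𝕜 E : Type*} [NontriviallyNormedField 𝕜] [SeminormedAddCommGroup E] [NormedSpace 𝕜 E]

instance [ProperSpace 𝕜] : SigmaCompactSpace (WeakDual 𝕜 E) where
  isSigmaCompact_univ := ⟨fun n => toStrongDual ⁻¹' Metric.closedBall 0 n,
    fun n => isCompact_closedBall 0 n,
    eq_univ_of_forall fun φ => mem_iUnion.2 ⟨⌈‖toStrongDual φ‖⌉₊, by simpa using Nat.le_ceil _⟩⟩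

theorem injective_evals_of_closedBall_subset_closure {ι : Type*} {x : ι → E}
    (hx : Metric.closedBall (0 : E) 1 ⊆ closure (range x)) :
    Function.Injective fun (φ : WeakDual 𝕜 E) i => φ (x i) := by
  have hball : Metric.ball (0 : E) 1 ⊆ closure (range x) := Metric.ball_subset_closedBall.trans hx
  have hspan : Dense (Submodule.span 𝕜 (range x) : Set E) :=
    Submodule.dense_span_of_nonempty_interior_closure
      ⟨0, Metric.isOpen_ball.subset_interior_iff.2 hball (Metric.mem_ball_self one_pos)⟩
  intro φ ψ h
  exact ContinuousLinearMap.ext_on (R₁ := 𝕜) hspan (by rintro _ ⟨i, rfl⟩; exact congrFun h i)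

end WeakDual

theorem borel_weakstar_eq_sigma_evaluations_general
    {X : Type*} [NormedAddCommGroup X] [NormedSpace ℝ X]
    (x : ℕ → X)
    (hdense : Metric.closedBall (0 : X) 1 ⊆ closure (Set.range x)) :
    borel (WeakDual ℝ X)
      = ⨆ n : ℕ, MeasurableSpace.comap (fun φ : WeakDual ℝ X => φ (x n)) (borel ℝ) := by
  have hΦc : Continuous fun (φ : WeakDual ℝ X) n => φ (x n) :=
    continuous_pi fun n => WeakDual.eval_continuous (x n)
  rw [borel_eq_comap_of_continuous_injective hΦc
      (WeakDual.injective_evals_of_closedBall_subset_closure hdense),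
    MeasurableSpace.comap_pi_eq_iSup]
  rfl

/-- Let `X` be a separable Banach space and let `(xₙ)` be a sequence dense in the closed
unit ball of `X`.  Then the Borel σ-field of the weak-star topology on the dual `X*`
coincides with the σ-field generated by the evaluation functionals `fₙ(φ) = φ(xₙ)`. -/
theorem borel_weakstar_eq_sigma_evaluations
    {X : Type*} [NormedAddCommGroup X] [NormedSpace ℝ X] [CompleteSpace X]
    [TopologicalSpace.SeparableSpace X]
    (x : ℕ → X) (hx : ∀ n, ‖x n‖ ≤ 1)
    (hdense : Metric.closedBall (0 : X) 1 ⊆ closure (Set.range x)) :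
    borel (WeakDual ℝ X)
      = ⨆ n : ℕ, MeasurableSpace.comap (fun φ : WeakDual ℝ X => φ (x n)) (borel ℝ) :=
  borel_weakstar_eq_sigma_evaluations_general x hdense
end
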